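/- Let -1 ≤ β < α < 1 with α > 0, and set λ = (1-α)/(α-β). Let S be a spherical {α,β}-code in ℝ^d of size n and rank r, and let A be the adjacency matrix of the associated β-graph Γ_β(S). If λI - A is not positive semidefinite (i.e., the largest eigenvalue of Γ_β(S) exceeds λ), then: λI - A has exactly one negative eigenvalue, the all-ones vector j lies in the column space of λI - A, for every {1}-inverse N of λI - A one has jᵀNj ≤ (α-β)/(-α), and rank(λI - A) = r + 1 if jᵀNj = (α-β)/(-α), while rank(λI - A) = r otherwise. -/

import Mathlib

open Matrix

noncomputable section

/-- The real inner product on `ℝ^d`. -/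
def rinner {d : ℕ} (x y : EuclideanSpace ℝ (Fin d)) : ℝ := inner ℝ x y

/-- A spherical `{α, β}`-code in `ℝ^d`: a family of unit vectors whose pairwise inner
products of distinct vectors lie in `{α, β}`. -/
def IsSphericalCode (α β : ℝ) {d n : ℕ} (u : Fin n → EuclideanSpace ℝ (Fin d)) : Prop :=
  (∀ i, ‖u i‖ = 1) ∧ ∀ i j, i ≠ j → rinner (u i) (u j) = α ∨ rinner (u i) (u j) = β

/-- Adjacency matrix of the associated `β`-graph `Γ_β(S)`. -/
def betaAdj (β : ℝ) {d n : ℕ} (u : Fin n → EuclideanSpace ℝ (Fin d)) :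
    Matrix (Fin n) (Fin n) ℝ :=
  Matrix.of fun i j => if i ≠ j ∧ rinner (u i) (u j) = β then 1 else 0


/-! The Gram matrix of the code is `G = (α - β) • M + α • j jᵀ` with `M = λI - A`, and it is
positive semidefinite of rank `r`. Hence the quadratic form of `M` is nonnegative on `j^⊥`.
If `M` is not positive semidefinite, two `M`-orthogonal vectors with negative form would
combine into one in `j^⊥`, so `M` has a single negative eigenvalue and `ker M ⊥ j`, i.e.
`j = M x₀`. For a `{1}`-inverse `N`, `jᵀNj = jᵀx₀ =: t` and `G x₀ = (α - β + α t) j`, so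
`0 ≤ x₀ᵀ G x₀ = (α - β + α t) t`; as `t > 0` would make `M` positive semidefinite, `t < 0` and
`α - β + α t ≤ 0`. Finally `ker G = ker M`, unless `α - β + α t = 0`, where
`ker G = ker M ⊕ ℝ x₀`. -/
open Module

namespace Matrix

variable {ι : Type*} [Fintype ι]

open scoped ComplexOrder in
theorem rank_gram {𝕜 E n : Type*} [RCLike 𝕜] [NormedAddCommGroup E] [InnerProductSpace 𝕜 E]
    [FiniteDimensional 𝕜 E] [Fintype n] (v : n → E) :
    (gram 𝕜 v).rank = finrank 𝕜 (Submodule.span 𝕜 (Set.range v)) := by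
  let b := stdOrthonormalBasis 𝕜 E
  let e := b.repr.toLinearEquiv.trans (WithLp.linearEquiv 2 𝕜 _)
  rw [gram_eq_conjTranspose_mul b, rank_conjTranspose_mul_self, rank_eq_finrank_span_cols,
    ← LinearEquiv.finrank_map_eq e, Submodule.map_span, ← Set.range_comp]
  rfl

theorem rank_add_finrank_ker {K : Type*} [Field K] (M : Matrix ι ι K) :
    M.rank + finrank K (LinearMap.ker M.mulVecLin) = Fintype.card ι := by
  rw [rank, LinearMap.finrank_range_add_finrank_ker, finrank_fintype_fun_eq_card]

section Real

variable {M : Matrix ι ι ℝ}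

theorem IsHermitian.dotProduct_mulVec_comm (hM : M.IsHermitian) (x y : ι → ℝ) :
    x ⬝ᵥ M *ᵥ y = y ⬝ᵥ M *ᵥ x := by
  rw [dotProduct_mulVec, ← mulVec_transpose, ← conjTranspose_eq_transpose_of_trivial, hM.eq,
    dotProduct_comm]

theorem exists_dotProduct_mulVec_neg (hM : M.IsHermitian) (hM' : ¬ M.PosSemidef) :
    ∃ x, x ⬝ᵥ M *ᵥ x < 0 := by
  by_contra! h
  exact hM' (PosSemidef.of_dotProduct_mulVec_nonneg hM fun x => by simpa using h x)

theorem exists_mulVec_eq_of_dotProduct_eq_zero (hM : M.IsHermitian) {j : ι → ℝ}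
    (hj : ∀ z, M *ᵥ z = 0 → j ⬝ᵥ z = 0) : ∃ x, M *ᵥ x = j := by
  classical
  have hT := isSymmetric_toEuclideanLin_iff.mpr hM
  have hmem : WithLp.toLp 2 j ∈ (LinearMap.ker M.toEuclideanLin)ᗮ := by
    refine (Submodule.mem_orthogonal' _ _).mpr fun z hz => ?_
    rw [EuclideanSpace.inner_eq_star_dotProduct, star_trivial, dotProduct_comm]
    exact hj _ (congrArg WithLp.ofLp hz)
  rw [← hT.orthogonal_range, Submodule.orthogonal_orthogonal] at hmem
  obtain ⟨x, hx⟩ := hmem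
  exact ⟨x.ofLp, congrArg WithLp.ofLp hx⟩

theorem IsHermitian.dotProduct_mulVec_eigenvectorBasis [DecidableEq ι] (hM : M.IsHermitian)
    (i k : ι) :
    ⇑(hM.eigenvectorBasis i) ⬝ᵥ M *ᵥ ⇑(hM.eigenvectorBasis k) =
      if i = k then hM.eigenvalues k else 0 := by
  have h := orthonormal_iff_ite.mp hM.eigenvectorBasis.orthonormal i k
  rw [EuclideanSpace.inner_eq_star_dotProduct, star_trivial, dotProduct_comm] at h
  rw [hM.mulVec_eigenvectorBasis, dotProduct_smul, h, smul_eq_mul, mul_ite, mul_one, mul_zero]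

variable (M) in
def CondPosSemidef (j : ι → ℝ) : Prop :=
  ∀ x, j ⬝ᵥ x = 0 → 0 ≤ x ⬝ᵥ M *ᵥ x

namespace CondPosSemidef

variable {j : ι → ℝ} (h : M.CondPosSemidef j) (hM : M.IsHermitian)
include h hM

theorem dotProduct_eq_zero {x y : ι → ℝ} (hx : x ⬝ᵥ M *ᵥ x < 0) (hy : y ⬝ᵥ M *ᵥ y ≤ 0)
    (hxy : x ⬝ᵥ M *ᵥ y = 0) : j ⬝ᵥ y = 0 := by
  by_contra hjy
  set w := (j ⬝ᵥ y) • x - (j ⬝ᵥ x) • y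
  have hw : j ⬝ᵥ w = 0 := by
    simp only [w, dotProduct_sub, dotProduct_smul, smul_eq_mul]
    ring
  have hyx : y ⬝ᵥ M *ᵥ x = 0 := by rw [hM.dotProduct_mulVec_comm, hxy]
  have hqw : w ⬝ᵥ M *ᵥ w = (j ⬝ᵥ y) ^ 2 * (x ⬝ᵥ M *ᵥ x) + (j ⬝ᵥ x) ^ 2 * (y ⬝ᵥ M *ᵥ y) := by
    simp only [w, mulVec_sub, mulVec_smul, dotProduct_sub, sub_dotProduct, dotProduct_smul,
      smul_dotProduct, hxy, hyx, smul_eq_mul]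
    ring
  have := hqw ▸ h w hw
  linarith [mul_neg_of_pos_of_neg (sq_pos_of_ne_zero hjy) hx,
    mul_nonpos_of_nonneg_of_nonpos (sq_nonneg (j ⬝ᵥ x)) hy]

theorem ne_zero (hM' : ¬ M.PosSemidef) : j ≠ 0 := by
  rintro rfl
  exact hM' (PosSemidef.of_dotProduct_mulVec_nonneg hM fun x => by
    simpa using h x (zero_dotProduct x))

theorem dotProduct_eq_zero_of_mulVec_eq_zero (hM' : ¬ M.PosSemidef) {z : ι → ℝ}
    (hz : M *ᵥ z = 0) : j ⬝ᵥ z = 0 := by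
  obtain ⟨x, hx⟩ := exists_dotProduct_mulVec_neg hM hM'
  exact h.dotProduct_eq_zero hM hx (by simp [hz]) (by simp [hz])

theorem exists_mulVec_eq (hM' : ¬ M.PosSemidef) : ∃ x, M *ᵥ x = j :=
  exists_mulVec_eq_of_dotProduct_eq_zero hM fun _ => h.dotProduct_eq_zero_of_mulVec_eq_zero hM hM'

theorem card_eigenvalues_neg [DecidableEq ι] (hM' : ¬ M.PosSemidef) :
    (Finset.univ.filter fun i => hM.eigenvalues i < 0).card = 1 := by
  obtain ⟨i₀, hi₀⟩ : ∃ i, hM.eigenvalues i < 0 := by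
    by_contra! hnn
    exact hM' (hM.posSemidef_iff_eigenvalues_nonneg.mpr hnn)
  have hq (i : ι) : ⇑(hM.eigenvectorBasis i) ⬝ᵥ M *ᵥ ⇑(hM.eigenvectorBasis i) =
      hM.eigenvalues i := by
    rw [hM.dotProduct_mulVec_eigenvectorBasis, if_pos rfl]
  refine Finset.card_eq_one.mpr ⟨i₀, Finset.eq_singleton_iff_unique_mem.mpr ⟨by simpa, ?_⟩⟩
  intro i hi
  rw [Finset.mem_filter] at hi
  by_contra hne
  have hj := h.dotProduct_eq_zero hM ((hq i₀).trans_lt hi₀) ((hq i).trans_le hi.2.le)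
    (by rw [hM.dotProduct_mulVec_eigenvectorBasis, if_neg (Ne.symm hne)])
  linarith [hq i ▸ h _ hj, hi.2]

theorem posSemidef_of_mulVec_eq {x₀ : ι → ℝ} (hx₀ : M *ᵥ x₀ = j) (ht : 0 < j ⬝ᵥ x₀) :
    M.PosSemidef := by
  refine PosSemidef.of_dotProduct_mulVec_nonneg hM fun x => ?_
  rw [star_trivial]
  set t := j ⬝ᵥ x₀
  set s := j ⬝ᵥ x
  set w := x - (s / t) • x₀
  have hw : j ⬝ᵥ w = 0 := by
    simp only [w, dotProduct_sub, dotProduct_smul, smul_eq_mul]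
    field_simp
    ring
  have hx₀x : x₀ ⬝ᵥ M *ᵥ x = s := by rw [hM.dotProduct_mulVec_comm, hx₀, dotProduct_comm]
  have hqw : w ⬝ᵥ M *ᵥ w = x ⬝ᵥ M *ᵥ x - s ^ 2 / t := by
    simp only [w, mulVec_sub, mulVec_smul, hx₀, dotProduct_sub, sub_dotProduct, dotProduct_smul,
      smul_dotProduct, hx₀x, smul_eq_mul, dotProduct_comm x₀ j, dotProduct_comm x j]
    field_simp
    ring
  linarith [hqw ▸ h w hw, div_nonneg (sq_nonneg s) ht.le]

end CondPosSemidef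

variable {j x₀ : ι → ℝ} {c a : ℝ}

theorem smul_add_vecMulVec_mulVec (x : ι → ℝ) :
    (c • M + a • vecMulVec j j) *ᵥ x = c • M *ᵥ x + (a * (j ⬝ᵥ x)) • j := by
  rw [add_mulVec, smul_mulVec, smul_mulVec, vecMulVec_mulVec, op_smul_eq_smul, smul_smul]

theorem condPosSemidef_of_posSemidef_smul_add_vecMulVec (hc : 0 < c)
    (hG : (c • M + a • vecMulVec j j).PosSemidef) : M.CondPosSemidef j := by
  intro x hx
  have := hG.dotProduct_mulVec_nonneg x
  rw [star_trivial, smul_add_vecMulVec_mulVec, hx, mul_zero, zero_smul, add_zero,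
    dotProduct_smul, smul_eq_mul] at this
  exact nonneg_of_mul_nonneg_right (by linarith) hc

section PosSemidef

variable (hM : M.IsHermitian) (hM' : ¬ M.PosSemidef) (hc : 0 < c)
  (hG : (c • M + a • vecMulVec j j).PosSemidef) (hx₀ : M *ᵥ x₀ = j)
include hM hM' hc hG hx₀

theorem dotProduct_neg_of_posSemidef_smul_add_vecMulVec : j ⬝ᵥ x₀ < 0 := by
  have h := condPosSemidef_of_posSemidef_smul_add_vecMulVec hc hG
  have hGx₀ : (c • M + a • vecMulVec j j) *ᵥ x₀ = (c + a * (j ⬝ᵥ x₀)) • j := by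
    rw [smul_add_vecMulVec_mulVec, hx₀, add_smul]
  rcases lt_trichotomy (j ⬝ᵥ x₀) 0 with ht | ht | ht
  · exact ht
  · have hq : star x₀ ⬝ᵥ (c • M + a • vecMulVec j j) *ᵥ x₀ = 0 := by
      rw [star_trivial, hGx₀, dotProduct_smul, dotProduct_comm x₀ j, ht, smul_zero]
    rw [hG.dotProduct_mulVec_zero_iff, hGx₀, ht, mul_zero, add_zero] at hq
    exact absurd ((smul_eq_zero.mp hq).resolve_left hc.ne') (h.ne_zero hM hM')
  · exact absurd (h.posSemidef_of_mulVec_eq hM hx₀ ht) hM'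

theorem add_mul_dotProduct_nonpos_of_posSemidef_smul_add_vecMulVec :
    c + a * (j ⬝ᵥ x₀) ≤ 0 := by
  have ht := dotProduct_neg_of_posSemidef_smul_add_vecMulVec hM hM' hc hG hx₀
  have hq := hG.dotProduct_mulVec_nonneg x₀
  rw [star_trivial, smul_add_vecMulVec_mulVec, hx₀, ← add_smul, dotProduct_smul, smul_eq_mul,
    dotProduct_comm x₀ j] at hq
  nlinarith

end PosSemidef

section Kernel

variable (hker : ∀ z, M *ᵥ z = 0 → j ⬝ᵥ z = 0) (hc : c ≠ 0) (hx₀ : M *ᵥ x₀ = j)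
include hker hc hx₀

theorem ker_smul_add_vecMulVec_of_ne (hM : M.IsHermitian) (hκ : c + a * (j ⬝ᵥ x₀) ≠ 0) :
    LinearMap.ker (c • M + a • vecMulVec j j).mulVecLin = LinearMap.ker M.mulVecLin := by
  ext z
  simp only [LinearMap.mem_ker, mulVecLin_apply, smul_add_vecMulVec_mulVec]
  constructor
  · intro hz
    have hjz : j ⬝ᵥ z = 0 := by
      have := congrArg (x₀ ⬝ᵥ ·) hz
      simp only [dotProduct_add, dotProduct_smul, dotProduct_zero, smul_eq_mul] at this
      rw [hM.dotProduct_mulVec_comm, hx₀, dotProduct_comm z j, dotProduct_comm x₀ j] at this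
      exact (mul_eq_zero.mp (by linear_combination this)).resolve_left hκ
    rw [hjz, mul_zero, zero_smul, add_zero] at hz
    exact (smul_eq_zero.mp hz).resolve_left hc
  · intro hz
    rw [hz, hker z hz, smul_zero, mul_zero, zero_smul, add_zero]

theorem ker_smul_add_vecMulVec_of_eq (hκ : c + a * (j ⬝ᵥ x₀) = 0) :
    LinearMap.ker (c • M + a • vecMulVec j j).mulVecLin =
      LinearMap.ker M.mulVecLin ⊔ Submodule.span ℝ {x₀} := by
  apply le_antisymm
  · intro z hz
    simp only [LinearMap.mem_ker, mulVecLin_apply, smul_add_vecMulVec_mulVec] at hz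
    have hw : z + (a / c * (j ⬝ᵥ z)) • x₀ ∈ LinearMap.ker M.mulVecLin := by
      rw [LinearMap.mem_ker, mulVecLin_apply, mulVec_add, mulVec_smul, hx₀]
      have := congrArg (c⁻¹ • ·) hz
      simp only [smul_add, smul_smul, smul_zero, inv_mul_cancel₀ hc, one_smul] at this
      rwa [div_eq_inv_mul, mul_assoc]
    have hz' : z = (z + (a / c * (j ⬝ᵥ z)) • x₀) - (a / c * (j ⬝ᵥ z)) • x₀ := by abel
    rw [hz']
    exact Submodule.sub_mem_sup hw (Submodule.smul_mem _ _ (Submodule.mem_span_singleton_self x₀))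
  · refine sup_le (fun z hz => ?_) ((Submodule.span_singleton_le_iff_mem _ _).mpr ?_)
    · rw [LinearMap.mem_ker, mulVecLin_apply] at hz ⊢
      rw [smul_add_vecMulVec_mulVec, hz, hker z hz, smul_zero, mul_zero, zero_smul, add_zero]
    · rw [LinearMap.mem_ker, mulVecLin_apply, smul_add_vecMulVec_mulVec, hx₀, ← add_smul, hκ,
        zero_smul]

end Kernel

theorem rank_eq_ite_rank_smul_add_vecMulVec (hM : M.IsHermitian) (hj : j ≠ 0)
    (hker : ∀ z, M *ᵥ z = 0 → j ⬝ᵥ z = 0) (hc : c ≠ 0) (hx₀ : M *ᵥ x₀ = j) :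
    M.rank = if c + a * (j ⬝ᵥ x₀) = 0 then (c • M + a • vecMulVec j j).rank + 1
      else (c • M + a • vecMulVec j j).rank := by
  have hrkM := rank_add_finrank_ker M
  have hrkG := rank_add_finrank_ker (c • M + a • vecMulVec j j)
  split_ifs with hκ
  · have hx₀ker : x₀ ∉ LinearMap.ker M.mulVecLin := by
      rwa [LinearMap.mem_ker, mulVecLin_apply, hx₀]
    rw [ker_smul_add_vecMulVec_of_eq hker hc hx₀ hκ,
      Submodule.finrank_sup_span_singleton hx₀ker] at hrkG
    omega
  · rw [ker_smul_add_vecMulVec_of_ne hker hc hx₀ hM hκ] at hrkG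
    omega

theorem dotProduct_mulVec_eq_of_mul_mul_eq (hM : M.IsHermitian) {N : Matrix ι ι ℝ}
    (hN : M * N * M = M) (hx₀ : M *ᵥ x₀ = j) : j ⬝ᵥ N *ᵥ j = j ⬝ᵥ x₀ := by
  calc j ⬝ᵥ N *ᵥ j = x₀ ⬝ᵥ (M * N * M) *ᵥ x₀ := by
        rw [← hx₀, dotProduct_comm, hM.dotProduct_mulVec_comm, mulVec_mulVec, mulVec_mulVec]
    _ = j ⬝ᵥ x₀ := by rw [hN, hx₀, dotProduct_comm]

end Real

end Matrix

theorem IsSphericalCode.gram_eq {α β : ℝ} {d n : ℕ} {u : Fin n → EuclideanSpace ℝ (Fin d)}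
    (hu : IsSphericalCode α β u) (hβα : β < α) :
    gram ℝ u = (α - β) • (((1 - α) / (α - β)) • (1 : Matrix (Fin n) (Fin n) ℝ) - betaAdj β u) +
      α • vecMulVec (fun _ => 1) (fun _ => 1) := by
  have hαβ : α - β ≠ 0 := sub_ne_zero.mpr hβα.ne'
  ext i k
  simp only [gram_apply, Matrix.add_apply, Matrix.smul_apply, Matrix.sub_apply, vecMulVec_apply,
    betaAdj, of_apply, smul_eq_mul, mul_one]
  by_cases hik : i = k
  · subst hik
    simp only [one_apply_eq, ne_eq, not_true_eq_false, false_and, if_false, sub_zero, mul_one]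
    rw [real_inner_self_eq_norm_sq, hu.1]
    field_simp
    ring
  · rw [one_apply_ne hik]
    change rinner (u i) (u k) = _
    rcases hu.2 i k hik with h | h <;> simp [hik, h, hβα.ne']

theorem stmt11_general (d n : ℕ)
    (α β lam : ℝ) (hβα : β < α) (hα₀ : 0 < α)
    (hlam : lam = (1 - α) / (α - β))
    (u : Fin n → EuclideanSpace ℝ (Fin d)) (hu : IsSphericalCode α β u)
    (r : ℕ) (hr : r = Module.finrank ℝ (Submodule.span ℝ (Set.range u)))
    (M : Matrix (Fin n) (Fin n) ℝ)
    (hM : M = lam • (1 : Matrix (Fin n) (Fin n) ℝ) - betaAdj β u)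
    (hherm : M.IsHermitian)
    (hnotpsd : ¬ M.PosSemidef) :
    (Finset.univ.filter fun i => hherm.eigenvalues i < 0).card = 1 ∧
    (∃ x : Fin n → ℝ, M *ᵥ x = fun _ => 1) ∧
    ∀ N : Matrix (Fin n) (Fin n) ℝ, M * N * M = M →
      (fun _ => (1 : ℝ)) ⬝ᵥ (N *ᵥ fun _ => 1) ≤ (α - β) / (-α) ∧
      M.rank =
        (if (fun _ => (1 : ℝ)) ⬝ᵥ (N *ᵥ fun _ => 1) = (α - β) / (-α) then r + 1 else r) := by
  have hc : 0 < α - β := sub_pos.mpr hβα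
  have hgram : gram ℝ u = (α - β) • M + α • vecMulVec (fun _ => 1) (fun _ => 1) := by
    rw [hM, hlam]
    exact hu.gram_eq hβα
  have hG := hgram ▸ posSemidef_gram ℝ u
  have hcond := condPosSemidef_of_posSemidef_smul_add_vecMulVec hc hG
  obtain ⟨x₀, hx₀⟩ := hcond.exists_mulVec_eq hherm hnotpsd
  refine ⟨hcond.card_eigenvalues_neg hherm hnotpsd, ⟨x₀, hx₀⟩, fun N hN => ?_⟩
  have hκ := add_mul_dotProduct_nonpos_of_posSemidef_smul_add_vecMulVec hherm hnotpsd hc hG hx₀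
  have hκ_eq : α - β + α * ((fun _ => 1) ⬝ᵥ x₀) = 0 ↔ (fun _ => 1) ⬝ᵥ x₀ = (α - β) / (-α) := by
    rw [eq_div_iff (neg_ne_zero.mpr hα₀.ne')]
    constructor <;> intro h <;> linarith
  rw [dotProduct_mulVec_eq_of_mul_mul_eq hherm hN hx₀, hr, ← rank_gram, hgram,
    rank_eq_ite_rank_smul_add_vecMulVec hherm (hcond.ne_zero hherm hnotpsd)
      (fun _ => hcond.dotProduct_eq_zero_of_mulVec_eq_zero hherm hnotpsd) hc.ne' hx₀]
  exact ⟨by rw [le_div_iff_of_neg (neg_neg_of_pos hα₀)]; linarith, if_congr hκ_eq rfl rfl⟩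

/-- for a spherical `{α,β}`-code with `α > 0`, `λ = (1-α)/(α-β)` and `A`
the adjacency matrix of the associated `β`-graph, if `λI - A` is not positive
semidefinite then it has exactly one negative eigenvalue, the all-ones vector lies in its
column space, every `{1}`-inverse `N` satisfies `jᵀNj ≤ (α-β)/(-α)`, and
`rank(λI - A)` is `r + 1` if `jᵀNj = (α-β)/(-α)` and `r` otherwise. -/
theorem stmt11 (d n : ℕ)
    (α β lam : ℝ) (hβ₁ : -1 ≤ β) (hβα : β < α) (hα : α < 1) (hα₀ : 0 < α)
    (hlam : lam = (1 - α) / (α - β))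
    (u : Fin n → EuclideanSpace ℝ (Fin d)) (hu : IsSphericalCode α β u)
    (r : ℕ) (hr : r = Module.finrank ℝ (Submodule.span ℝ (Set.range u)))
    (M : Matrix (Fin n) (Fin n) ℝ)
    (hM : M = lam • (1 : Matrix (Fin n) (Fin n) ℝ) - betaAdj β u)
    (hherm : M.IsHermitian)
    (hnotpsd : ¬ M.PosSemidef) :
    (Finset.univ.filter fun i => hherm.eigenvalues i < 0).card = 1 ∧
    (∃ x : Fin n → ℝ, M *ᵥ x = fun _ => 1) ∧
    ∀ N : Matrix (Fin n) (Fin n) ℝ, M * N * M = M →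
      (fun _ => (1 : ℝ)) ⬝ᵥ (N *ᵥ fun _ => 1) ≤ (α - β) / (-α) ∧
      M.rank =
        (if (fun _ => (1 : ℝ)) ⬝ᵥ (N *ᵥ fun _ => 1) = (α - β) / (-α) then r + 1 else r) :=
  stmt11_general d n α β lam hβα hα₀ hlam u hu r hr M hM hherm hnotpsd
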